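/- (Conditional variance as seminorm, RL case) Conditional on the history up to state x_t (so ρ_{0:t-1} is fixed) with a_t ~ μ(·|x_t), for any vector F_t : Fin K → ℝ, Var[ρ_{0:t-1} π(a_t|x_t) q(a_t)/μ(a_t|x_t) - F_t(a_t)/μ(a_t|x_t) | x_t] = ‖F_t - ρ_{0:t-1}·(π(·|x_t) ⊙ q)‖²_{M_t}, where q : Fin K → ℝ, (π ⊙ q)(a) = π(a|x_t) q(a), and M_t = diag(1/μ(a|x_t)) - J. -/

import Mathlib

/-! With `g = F - ρ·(π ⊙ q)` the random variable is `-g(a)/μ(a)`; its mean is `-∑ g` and its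
second moment is `∑ g²/μ`, so its variance is `∑ g²/μ - (∑ g)²`, which is exactly the quadratic
form of `diag(1/μ) - J` at `g`. -/

open Matrix BigOperators

/-- Expectation of `f A` for `A ~ μ` on `Fin K`. -/
def expec {K : ℕ} (μ : Fin K → ℝ) (f : Fin K → ℝ) : ℝ := ∑ a, μ a * f a

/-- Variance of `f A` for `A ~ μ`. -/
def variance' {K : ℕ} (μ : Fin K → ℝ) (f : Fin K → ℝ) : ℝ :=
  expec μ (fun a => (f a - expec μ f) ^ 2)

theorem variance'_eq_expec_sq_sub_sq {K : ℕ} (μ f : Fin K → ℝ) (hμsum : ∑ a, μ a = 1) :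
    variance' μ f = expec μ (fun a => f a ^ 2) - expec μ f ^ 2 := by
  unfold variance' expec
  set m := ∑ a, μ a * f a
  calc ∑ a, μ a * (f a - m) ^ 2
      = ∑ a, μ a * f a ^ 2 - 2 * m * ∑ a, μ a * f a + m ^ 2 * ∑ a, μ a := by
        simp only [Finset.mul_sum, ← Finset.sum_sub_distrib, ← Finset.sum_add_distrib]
        exact Finset.sum_congr rfl fun a _ => by ring
    _ = ∑ a, μ a * f a ^ 2 - m ^ 2 := by rw [hμsum]; ring

theorem expec_div_self {K : ℕ} (μ c : Fin K → ℝ) (hμ : ∀ a, μ a ≠ 0) :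
    expec μ (fun a => c a / μ a) = ∑ a, c a :=
  Finset.sum_congr rfl fun a _ => mul_div_cancel₀ _ (hμ a)

theorem expec_sq_div_self {K : ℕ} (μ c : Fin K → ℝ) (hμ : ∀ a, μ a ≠ 0) :
    expec μ (fun a => (c a / μ a) ^ 2) = ∑ a, (μ a)⁻¹ * c a ^ 2 :=
  Finset.sum_congr rfl fun a _ => by field_simp [hμ a]

theorem Matrix.dotProduct_diagonal_sub_of_one_mulVec {ι R : Type*} [Fintype ι] [DecidableEq ι]
    [CommRing R] (d v : ι → R) :
    v ⬝ᵥ ((diagonal d - of fun _ _ : ι => (1 : R)) *ᵥ v) = ∑ a, d a * v a ^ 2 - (∑ a, v a) ^ 2 := by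
  have hJ : (of fun _ _ : ι => (1 : R)) *ᵥ v = fun _ => ∑ a, v a := by
    ext i; simp [mulVec, dotProduct]
  rw [sub_mulVec, hJ, dotProduct_sub]
  simp only [dotProduct, mulVec_diagonal, ← Finset.sum_mul, sq]
  exact congrArg₂ _ (Finset.sum_congr rfl fun a _ => by ring) rfl

theorem stmt_17_general (K : ℕ)
    (μ π : Fin K → ℝ)
    (hμpos : ∀ a, 0 < μ a) (hμsum : ∑ a, μ a = 1)
    (ρpre : ℝ) (q F : Fin K → ℝ) :
    variance' μ (fun a => ρpre * π a * q a / μ a - F a / μ a)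
      = (fun a => F a - ρpre * (π a * q a)) ⬝ᵥ
          ((Matrix.diagonal (fun a => (μ a)⁻¹)
            - Matrix.of (fun _ _ : Fin K => (1 : ℝ))) *ᵥ
            (fun a => F a - ρpre * (π a * q a))) := by
  have hμ : ∀ a, μ a ≠ 0 := fun a => (hμpos a).ne'
  set g : Fin K → ℝ := fun a => F a - ρpre * (π a * q a)
  have hf : (fun a => ρpre * π a * q a / μ a - F a / μ a) = fun a => -g a / μ a := by
    ext a; simp only [g]; ring
  rw [hf, variance'_eq_expec_sq_sub_sq _ _ hμsum, expec_sq_div_self _ _ hμ,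
    expec_div_self _ _ hμ, dotProduct_diagonal_sub_of_one_mulVec]
  simp only [neg_sq, Finset.sum_neg_distrib]

/-- conditional variance as seminorm, RL case: conditional
on the history (so `ρ_{0:t-1} = ρpre` is a fixed scalar) with `a_t ~ μ`,
`Var[ρpre·π(a)q(a)/μ(a) - F(a)/μ(a)] = ‖F - ρpre·(π ⊙ q)‖²_M`
for `M = diag(1/μ) - J`. -/
theorem stmt_17 (K : ℕ) (hK : 1 ≤ K)
    (μ π : Fin K → ℝ)
    (hμpos : ∀ a, 0 < μ a) (hμsum : ∑ a, μ a = 1)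
    (hπnonneg : ∀ a, 0 ≤ π a) (hπsum : ∑ a, π a = 1)
    (ρpre : ℝ) (q F : Fin K → ℝ) :
    variance' μ (fun a => ρpre * π a * q a / μ a - F a / μ a)
      = (fun a => F a - ρpre * (π a * q a)) ⬝ᵥ
          ((Matrix.diagonal (fun a => (μ a)⁻¹)
            - Matrix.of (fun _ _ : Fin K => (1 : ℝ))) *ᵥ
            (fun a => F a - ρpre * (π a * q a))) :=
  stmt_17_general K μ π hμpos hμsum ρpre q F
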